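/- Let p, q be integers with 1 ≤ p < q and let w = a^{α_0} θ_1 a^{α_1} ⋯ θ_k a^{α_k} (with θ_i ∈ {t, t⁻¹}, α_i ∈ ℤ) be a geodesic word representing its element of BS(p,q). If 0 ≤ i < k and θ_{i+1} = t, then |α_i| < q; and if 1 ≤ j ≤ k and θ_j = t⁻¹, then |α_j| < q. In other words, in a geodesic word a power block a^{α_i} with |α_i| ≥ q can occur only at a local peak. -/

import Mathlib

inductive Letter : Type
  | a | A | t | T
  deriving DecidableEq

def bsRel (p q : ℤ) : Set (FreeGroup Bool) :=
  {FreeGroup.of true * (FreeGroup.of false) ^ p * (FreeGroup.of true)⁻¹ * (FreeGroup.of false) ^ (-q)}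

abbrev BS (p q : ℤ) := PresentedGroup (bsRel p q)

def evalLetter (p q : ℤ) : Letter → BS p q
  | .a => PresentedGroup.of false
  | .A => (PresentedGroup.of false)⁻¹
  | .t => PresentedGroup.of true
  | .T => (PresentedGroup.of true)⁻¹

def eval (p q : ℤ) (w : List Letter) : BS p q := (w.map (evalLetter p q)).prod

def aPow (α : ℤ) : List Letter :=
  if 0 ≤ α then List.replicate α.toNat Letter.a else List.replicate (-α).toNat Letter.A

def Geodesic (p q : ℤ) (w : List Letter) : Prop :=
  ∀ v : List Letter, eval p q v = eval p q w → w.length ≤ v.length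

/-- Ranking of letters in the order `t < T < a < A`. -/
def letterIdx : Letter → ℕ
  | .t => 0
  | .T => 1
  | .a => 2
  | .A => 3

/-- Length-lexicographical strict order on words, with letters ordered `t < T < a < A`. -/
def llLt (u v : List Letter) : Prop :=
  u.length < v.length ∨
    (u.length = v.length ∧ List.Lex (· < ·) (u.map letterIdx) (v.map letterIdx))

/-- `IsLlnf p q v w` : `v` is the length-lexicographical normal form of `w`,
i.e. `v` represents the same element as `w` and no word representing this element
precedes `v` in the length-lexicographical order. -/
def IsLlnf (p q : ℤ) (v w : List Letter) : Prop :=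
  eval p q v = eval p q w ∧ ∀ u : List Letter, eval p q u = eval p q w → ¬ llLt u v

/-- A word contains no factors `a a⁻¹` or `a⁻¹ a`. -/
def Reduced (w : List Letter) : Prop :=
  (∀ u v : List Letter, w ≠ u ++ [Letter.a, Letter.A] ++ v) ∧
  (∀ u v : List Letter, w ≠ u ++ [Letter.A, Letter.a] ++ v)

/-- A word is Britton-reduced: it has no factors `a a⁻¹`, `a⁻¹ a`,
`t a^{pμ} t⁻¹` or `t⁻¹ a^{qμ} t` (with `μ ∈ ℤ`). -/
def BrittonReduced (p q : ℤ) (w : List Letter) : Prop :=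
  Reduced w ∧
  (∀ u v : List Letter, ∀ μ : ℤ, w ≠ u ++ [Letter.t] ++ aPow (p * μ) ++ [Letter.T] ++ v) ∧
  (∀ u v : List Letter, ∀ μ : ℤ, w ≠ u ++ [Letter.T] ++ aPow (q * μ) ++ [Letter.t] ++ v)

/-- The t-sequence of a word: its subsequence of letters from `{t, t⁻¹}`. -/
def tSeq (w : List Letter) : List Letter :=
  w.filter (fun c => c == Letter.t || c == Letter.T)

/-- The geodesic length of a group element: the least length of a word representing it. -/
noncomputable def geodesicLength (p q : ℤ) (g : BS p q) : ℕ :=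
  sInf {n : ℕ | ∃ w : List Letter, eval p q w = g ∧ w.length = n}

/-- A valley: every prefix has height `≤ 0` and the total height is `0`,
where the height of a prefix is (number of `t`'s) − (number of `t⁻¹`'s). -/
def IsValley (w : List Letter) : Prop :=
  (∀ u v : List Letter, w = u ++ v → u.count Letter.t ≤ u.count Letter.T) ∧
  w.count Letter.t = w.count Letter.T


/-- The word `a^{α_0} θ_1 a^{α_1} ⋯ θ_k a^{α_k}`. -/
def buildWord (k : ℕ) (αs : Fin (k + 1) → ℤ) (θs : Fin k → Letter) : List Letter :=
  aPow (αs 0) ++ (List.ofFn fun i : Fin k => θs i :: aPow (αs i.succ)).flatten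

/-!
Conjugation by `t` carries `a^{p n}` to `a^{q n}`, so a block `a^α` with `|α| ≥ q` standing just
before a `t` can hand `q` of its letters across it, `a^α t = a^{α - q n} t a^{p n}` with
`n = sign α`, and symmetrically a block just after a `t⁻¹` can hand `q` letters back across it.
Since `p < q`, either rewriting shortens the word, so such a block cannot occur in a geodesic.
-/

theorem eval_append (p q : ℤ) (u v : List Letter) :
    eval p q (u ++ v) = eval p q u * eval p q v := by
  simp [eval]

theorem eval_singleton (p q : ℤ) (c : Letter) : eval p q [c] = evalLetter p q c := by
  simp [eval]

theorem eval_aPow (p q α : ℤ) : eval p q (aPow α) = (PresentedGroup.of false : BS p q) ^ α := by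
  unfold eval aPow
  split_ifs with hα
  · rw [List.map_replicate, List.prod_replicate, ← zpow_natCast, Int.toNat_of_nonneg hα]
    rfl
  · rw [List.map_replicate, List.prod_replicate, ← zpow_natCast, Int.toNat_of_nonneg (by omega)]
    simp [evalLetter]

theorem length_aPow (α : ℤ) : (aPow α).length = α.natAbs := by
  unfold aPow
  split_ifs <;> simp <;> omega

theorem bs_zpow_mul_t (p q n : ℤ) :
    (PresentedGroup.of false : BS p q) ^ (q * n) * PresentedGroup.of true =
      PresentedGroup.of true * (PresentedGroup.of false) ^ (p * n) := by
  set a : BS p q := PresentedGroup.of false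
  set t : BS p q := PresentedGroup.of true
  have hrel : t * a ^ p * t⁻¹ * a ^ (-q) = 1 :=
    (QuotientGroup.eq_one_iff _).mpr (Subgroup.subset_normalClosure rfl)
  have hconj : a ^ q = t * a ^ p * t⁻¹ := by
    rw [zpow_neg] at hrel
    exact (mul_inv_eq_one.mp hrel).symm
  rw [zpow_mul, hconj, conj_zpow, ← zpow_mul, inv_mul_cancel_right]

theorem bs_t_inv_mul_zpow (p q n : ℤ) :
    (PresentedGroup.of true : BS p q)⁻¹ * (PresentedGroup.of false) ^ (q * n) =
      (PresentedGroup.of false) ^ (p * n) * (PresentedGroup.of true)⁻¹ := by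
  rw [inv_mul_eq_iff_eq_mul, ← mul_assoc, ← bs_zpow_mul_t, mul_inv_cancel_right]

theorem natAbs_sub_mul_sign_add {α q : ℤ} (hq : 0 ≤ q) (hα : q ≤ |α|) :
    (α - q * α.sign).natAbs + q.natAbs = α.natAbs := by
  rcases lt_trichotomy α 0 with hneg | rfl | hpos
  · rw [abs_of_neg hneg] at hα
    rw [Int.sign_eq_neg_one_of_neg hneg]
    omega
  · simp at hα ⊢
    omega
  · rw [abs_of_pos hpos] at hα
    rw [Int.sign_eq_one_of_pos hpos]
    omega

theorem length_aPow_sub_mul_sign_add_lt {p q α : ℤ} (hpq : |p| < q) (hα : q ≤ |α|) :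
    (aPow (α - q * α.sign)).length + (aPow (p * α.sign)).length < (aPow α).length := by
  have hsign : α.sign.natAbs = 1 :=
    Int.natAbs_sign_of_ne_zero (by rintro rfl; simp at hα; linarith [abs_nonneg p])
  have hsplit := natAbs_sub_mul_sign_add (by linarith [abs_nonneg p]) hα
  have := abs_lt.mp hpq
  simp only [length_aPow, Int.natAbs_mul, hsign, mul_one]
  omega

theorem Geodesic.of_infix {p q : ℤ} {v w : List Letter} (hw : Geodesic p q w) (hvw : v <:+: w) :
    Geodesic p q v := by
  obtain ⟨c, d, rfl⟩ := hvw
  intro v' hv'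
  have := hw (c ++ v' ++ d) (by simp only [eval_append, hv'])
  simp only [List.length_append] at this
  omega

theorem abs_lt_of_geodesic_aPow_t {p q α : ℤ} (hpq : |p| < q)
    (hgeo : Geodesic p q (aPow α ++ [Letter.t])) : |α| < q := by
  by_contra! hα
  have hshorter := hgeo (aPow (α - q * α.sign) ++ [Letter.t] ++ aPow (p * α.sign)) (by
    simp only [eval_append, eval_aPow, eval_singleton, evalLetter]
    rw [mul_assoc, ← bs_zpow_mul_t, ← mul_assoc, ← zpow_add, sub_add_cancel])
  have := length_aPow_sub_mul_sign_add_lt hpq hα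
  simp only [List.length_append, List.length_singleton] at hshorter
  omega

theorem abs_lt_of_geodesic_t_inv_aPow {p q α : ℤ} (hpq : |p| < q)
    (hgeo : Geodesic p q ([Letter.T] ++ aPow α)) : |α| < q := by
  by_contra! hα
  have hshorter := hgeo (aPow (p * α.sign) ++ [Letter.T] ++ aPow (α - q * α.sign)) (by
    simp only [eval_append, eval_aPow, eval_singleton, evalLetter]
    rw [← bs_t_inv_mul_zpow, mul_assoc, ← zpow_add, add_sub_cancel])
  have := length_aPow_sub_mul_sign_add_lt hpq hα
  simp only [List.length_append, List.length_singleton] at hshorter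
  omega

theorem buildWord_succ (k : ℕ) (αs : Fin (k + 2) → ℤ) (θs : Fin (k + 1) → Letter) :
    buildWord (k + 1) αs θs =
      aPow (αs 0) ++ θs 0 :: buildWord k (fun j => αs j.succ) (fun j => θs j.succ) := by
  simp [buildWord, List.ofFn_succ, Fin.succ_zero_eq_one]

theorem aPow_cons_aPow_infix_buildWord (k : ℕ) (αs : Fin (k + 1) → ℤ) (θs : Fin k → Letter)
    (i : Fin k) : aPow (αs i.castSucc) ++ θs i :: aPow (αs i.succ) <:+: buildWord k αs θs := by
  induction k with
  | zero => exact i.elim0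
  | succ k ih =>
    rw [buildWord_succ]
    induction i using Fin.cases with
    | zero =>
      cases k with
      | zero => simp [buildWord]
      | succ k =>
        rw [buildWord_succ]
        exact ⟨[], θs 1 :: buildWord k (fun j => αs j.succ.succ) (fun j => θs j.succ.succ),
          by simp⟩
    | succ j =>
      rw [← Fin.succ_castSucc]
      exact (ih (fun m => αs m.succ) (fun m => θs m.succ) j).trans
        ⟨aPow (αs 0) ++ [θs 0], [], by simp⟩

theorem geodesic_small_blocks_off_peaks_general (p q : ℤ) (hp : 1 ≤ p) (hpq : p < q) (k : ℕ)
    (αs : Fin (k + 1) → ℤ) (θs : Fin k → Letter)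
    (hgeo : Geodesic p q (buildWord k αs θs)) :
    ∀ i : Fin k,
      (θs i = Letter.t → |αs i.castSucc| < q) ∧ (θs i = Letter.T → |αs i.succ| < q) := by
  intro i
  have hpq' : |p| < q := abs_lt.mpr ⟨by linarith, hpq⟩
  have hblock := hgeo.of_infix (aPow_cons_aPow_infix_buildWord k αs θs i)
  refine ⟨fun ht => abs_lt_of_geodesic_aPow_t hpq' (hblock.of_infix ?_),
    fun hT => abs_lt_of_geodesic_t_inv_aPow hpq' (hblock.of_infix ?_)⟩
  · exact ⟨[], aPow (αs i.succ), by simp [ht]⟩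
  · exact ⟨aPow (αs i.castSucc), [], by simp [hT]⟩

theorem geodesic_small_blocks_off_peaks (p q : ℤ) (hp : 1 ≤ p) (hpq : p < q) (k : ℕ)
    (αs : Fin (k + 1) → ℤ) (θs : Fin k → Letter)
    (hθ : ∀ i, θs i = Letter.t ∨ θs i = Letter.T)
    (hgeo : Geodesic p q (buildWord k αs θs)) :
    ∀ i : Fin k,
      (θs i = Letter.t → |αs i.castSucc| < q) ∧ (θs i = Letter.T → |αs i.succ| < q) :=
  geodesic_small_blocks_off_peaks_general p q hp hpq k αs θs hgeo
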